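/- For scenario i, define the fixed-voltage solution P̂_i = min over k with (FΛ_i)[k] > 0 of (v⁺ − v̄[k])/(FΛ_i)[k] (assuming FΛ_i has a positive entry and v̄ < v⁺·1). Then for any P ≥ 0, the overvoltage indicator satisfies 1[max_k ((FΛ_i)[k]·P + v̄[k]) > v⁺] = 1[P > P̂_i]. Consequently the empirical probability ε̂(P) = (1/N)Σ_i 1[P > P̂_i], i.e., the fixed-voltage quantities {P̂_i} determine ε̂ at every power level simultaneously. -/
import Mathlib


open Finset

/-- the fixed-voltage quantities `P̂ᵢ` determine the empirical
overvoltage probability at every power level: for `P ≥ 0` the overvoltage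
indicator of scenario `i` equals the indicator of `P > P̂ᵢ`, and hence
`ε̂(P) = (1/N)·#{i : P̂ᵢ < P}`. -/
theorem stmt4 {m n : ℕ} (hm : (Finset.univ : Finset (Fin m)).Nonempty)
    (N : ℕ) (hN : 0 < N)
    (F : Matrix (Fin m) (Fin n) ℝ) (Λ : Fin N → Fin n → ℝ)
    (hΛ : ∀ i j, Λ i j = 0 ∨ Λ i j = 1)
    (vbar : Fin m → ℝ) (vplus : ℝ) (hv : ∀ k, vbar k < vplus)
    (hpos : ∀ i : Fin N,
      (Finset.univ.filter fun k => 0 < F.mulVec (Λ i) k).Nonempty)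
    (Phat : Fin N → ℝ)
    (hPhat : ∀ i, Phat i =
      (Finset.univ.filter fun k => 0 < F.mulVec (Λ i) k).inf' (hpos i)
        (fun k => (vplus - vbar k) / F.mulVec (Λ i) k))
    (eps : ℝ → ℝ)
    (heps : ∀ P, eps P = ((Finset.univ.filter fun i : Fin N =>
      vplus < Finset.univ.sup' hm
        (fun k => F.mulVec (Λ i) k * P + vbar k)).card : ℝ) / N) :
    (∀ i : Fin N, ∀ P : ℝ, 0 ≤ P →
      ((vplus < Finset.univ.sup' hm
        (fun k => F.mulVec (Λ i) k * P + vbar k)) ↔ Phat i < P)) ∧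
    ∀ P : ℝ, 0 ≤ P →
      eps P = ((Finset.univ.filter fun i : Fin N => Phat i < P).card : ℝ) / N := by
  have key : ∀ i : Fin N, ∀ P : ℝ, 0 ≤ P →
      ((vplus < Finset.univ.sup' hm
        (fun k => F.mulVec (Λ i) k * P + vbar k)) ↔ Phat i < P) := by
    intro i P hP
    rw [hPhat i]
    constructor
    · intro h
      rw [Finset.lt_sup'_iff] at h
      obtain ⟨k, -, hk⟩ := h
      have h1 : vplus - vbar k < F.mulVec (Λ i) k * P := by linarith
      have h2 : 0 < F.mulVec (Λ i) k * P := lt_trans (by linarith [hv k]) h1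
      have ha : 0 < F.mulVec (Λ i) k := by
        by_contra hc
        push_neg at hc
        nlinarith
      rw [Finset.inf'_lt_iff]
      refine ⟨k, by simp [ha], ?_⟩
      rw [div_lt_iff₀ ha]
      linarith
    · intro h
      rw [Finset.inf'_lt_iff] at h
      obtain ⟨k, hk, hlt⟩ := h
      simp only [Finset.mem_filter] at hk
      have ha := hk.2
      rw [div_lt_iff₀ ha] at hlt
      rw [Finset.lt_sup'_iff]
      exact ⟨k, Finset.mem_univ k, by nlinarith⟩
  refine ⟨key, fun P hP => ?_⟩
  rw [heps P]
  congr 3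
  apply Finset.filter_congr
  intro i _
  simp [key i P hP]
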